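/- Let M be a matching of maximum weight among all matchings of size n/3 in G. Then c(E_2) ≥ w(X_2) + w(X_3) + w(X_4) + w(X_7) − w(Y_7), and c(E_3) = w(X_5). -/
import Mathlib


open Finset
open scoped Classical

namespace MW3PP

/-- A 3-path `xyz`: a path on three distinct vertices with middle vertex `y`. -/
structure P3 (V : Type*) where
  x : V
  y : V
  z : V
  hxy : x ≠ y
  hyz : y ≠ z
  hxz : x ≠ z

variable {V : Type*} [Fintype V] [DecidableEq V]

/-- The vertex set of a 3-path. -/
def P3.verts (p : P3 V) : Finset V := {p.x, p.y, p.z}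

/-- The two edges of a 3-path. -/
def P3.edges (p : P3 V) : Finset (Sym2 V) := {s(p.x, p.y), s(p.y, p.z)}

/-- The weight of a 3-path. -/
def P3.wt (w : Sym2 V → ℝ) (p : P3 V) : ℝ := w s(p.x, p.y) + w s(p.y, p.z)

/-- The total weight of a set of edges. -/
def ew (w : Sym2 V → ℝ) (F : Finset (Sym2 V)) : ℝ := ∑ e ∈ F, w e

/-- The total weight of a set of 3-paths. -/
def pw (w : Sym2 V → ℝ) (P : Finset (P3 V)) : ℝ := ∑ p ∈ P, p.wt w

/-- `∑_{xyz ∈ S} max (w (xy)) (w (yz))`. -/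
def maxSum (w : Sym2 V → ℝ) (S : Finset (P3 V)) : ℝ :=
  ∑ p ∈ S, max (w s(p.x, p.y)) (w s(p.y, p.z))

/-- A perfect 3-path packing: `n/3` pairwise vertex-disjoint 3-paths covering all vertices. -/
def IsPacking (P : Finset (P3 V)) : Prop :=
  P.card = Fintype.card V / 3 ∧
  (∀ p ∈ P, ∀ q ∈ P, p ≠ q → Disjoint p.verts q.verts) ∧
  (∀ v : V, ∃ p ∈ P, v ∈ p.verts)

/-- A maximum-weight perfect 3-path packing. -/
def IsMaxPacking (w : Sym2 V → ℝ) (P : Finset (P3 V)) : Prop :=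
  IsPacking P ∧ ∀ Q : Finset (P3 V), IsPacking Q → pw w Q ≤ pw w P

/-- A matching: a set of pairwise vertex-disjoint (non-loop) edges. -/
def IsMatching (M : Finset (Sym2 V)) : Prop :=
  (∀ e ∈ M, ¬ e.IsDiag) ∧
  ∀ e ∈ M, ∀ f ∈ M, e ≠ f → ∀ v : V, v ∈ e → v ∉ f

/-- A maximum-weight matching among all matchings of size `k`. -/
def IsMaxMatchingOfSize (w : Sym2 V → ℝ) (k : ℕ) (M : Finset (Sym2 V)) : Prop :=
  IsMatching M ∧ M.card = k ∧
  ∀ M' : Finset (Sym2 V), IsMatching M' → M'.card = k → ew w M' ≤ ew w M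

/-- `v ∈ V(M)` : vertex `v` is covered by the matching `M`. -/
def covered (M : Finset (Sym2 V)) (v : V) : Prop := ∃ e ∈ M, v ∈ e

/-- `e_u` : the edge of `M` containing `u` (junk value if there is none). -/
noncomputable def eMatch (M : Finset (Sym2 V)) (u : V) : Sym2 V :=
  if h : ∃ e ∈ M, u ∈ e then h.choose else s(u, u)

/-- The cost `c` of an edge with respect to a matching `M`:
`c(uv) = w(uv) - min (w (e_u)) (w (e_v))` if both endpoints are covered by `M`,
and `c(uv) = w(uv)` otherwise. -/
noncomputable def cost (w : Sym2 V → ℝ) (M : Finset (Sym2 V)) : Sym2 V → ℝ :=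
  Sym2.lift ⟨fun u v =>
    if covered M u ∧ covered M v then
      w s(u, v) - min (w (eMatch M u)) (w (eMatch M v))
    else w s(u, v), by
      intro u v
      dsimp only
      by_cases h : covered M u ∧ covered M v
      · rw [if_pos h, if_pos (show covered M v ∧ covered M u from ⟨h.2, h.1⟩),
          Sym2.eq_swap, min_comm]
      · rw [if_neg h, if_neg (show ¬(covered M v ∧ covered M u) from fun h' => h ⟨h'.2, h'.1⟩),
          Sym2.eq_swap]⟩

/-- The total cost of a set of edges. -/
noncomputable def cw (w : Sym2 V → ℝ) (M F : Finset (Sym2 V)) : ℝ := ∑ e ∈ F, cost w M e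

/-- The number of vertices of the 3-path `p` covered by `M`. -/
noncomputable def kcnt (M : Finset (Sym2 V)) (p : P3 V) : ℕ :=
  (p.verts.filter fun v => covered M v).card

/-- Exactly one of the two edges of `p` lies in `M`. -/
def exOne (M : Finset (Sym2 V)) (p : P3 V) : Prop :=
  (s(p.x, p.y) ∈ M ∧ s(p.y, p.z) ∉ M) ∨ (s(p.x, p.y) ∉ M ∧ s(p.y, p.z) ∈ M)

def cls1 (M : Finset (Sym2 V)) (p : P3 V) : Prop := kcnt M p = 0
def cls2 (M : Finset (Sym2 V)) (p : P3 V) : Prop := kcnt M p = 1 ∧ ¬ covered M p.y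
def cls3 (M : Finset (Sym2 V)) (p : P3 V) : Prop := kcnt M p = 1 ∧ covered M p.y
def cls4 (M : Finset (Sym2 V)) (p : P3 V) : Prop := kcnt M p = 2 ∧ ¬ covered M p.y
def cls5 (M : Finset (Sym2 V)) (p : P3 V) : Prop := kcnt M p = 2 ∧ covered M p.y ∧ exOne M p
def cls6 (M : Finset (Sym2 V)) (p : P3 V) : Prop :=
  kcnt M p = 2 ∧ covered M p.y ∧ s(p.x, p.y) ∉ M ∧ s(p.y, p.z) ∉ M
def cls7 (M : Finset (Sym2 V)) (p : P3 V) : Prop := kcnt M p = 3 ∧ exOne M p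
def cls8 (M : Finset (Sym2 V)) (p : P3 V) : Prop :=
  kcnt M p = 3 ∧ s(p.x, p.y) ∉ M ∧ s(p.y, p.z) ∉ M

/-- The subset of a set of 3-paths satisfying a predicate. -/
noncomputable def psel (P : Finset (P3 V)) (c : P3 V → Prop) : Finset (P3 V) := P.filter c

/-- The set of all edges of the 3-paths in `S`. -/
def Esub (S : Finset (P3 V)) : Finset (Sym2 V) := S.biUnion P3.edges

/-- The heaviest edge of a 3-path (the edge `xy` in case of a tie). -/
noncomputable def heavy (w : Sym2 V → ℝ) (p : P3 V) : Sym2 V :=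
  if w s(p.y, p.z) ≤ w s(p.x, p.y) then s(p.x, p.y) else s(p.y, p.z)

noncomputable def X1 (w : Sym2 V → ℝ) (P : Finset (P3 V)) (M : Finset (Sym2 V)) :
    Finset (Sym2 V) := (psel P (cls1 M)).image (heavy w)
noncomputable def X2 (P : Finset (P3 V)) (M : Finset (Sym2 V)) : Finset (Sym2 V) :=
  (psel P (cls2 M)).image fun p => if covered M p.x then s(p.x, p.y) else s(p.y, p.z)
noncomputable def X3 (w : Sym2 V → ℝ) (P : Finset (P3 V)) (M : Finset (Sym2 V)) :
    Finset (Sym2 V) := (psel P (cls3 M)).image (heavy w)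
noncomputable def X4 (w : Sym2 V → ℝ) (P : Finset (P3 V)) (M : Finset (Sym2 V)) :
    Finset (Sym2 V) := (psel P (cls4 M)).image (heavy w)
noncomputable def X5 (P : Finset (P3 V)) (M : Finset (Sym2 V)) : Finset (Sym2 V) :=
  (psel P (cls5 M)).image fun p => if s(p.x, p.y) ∈ M then s(p.y, p.z) else s(p.x, p.y)
noncomputable def X6 (P : Finset (P3 V)) (M : Finset (Sym2 V)) : Finset (Sym2 V) :=
  (psel P (cls6 M)).image fun p => if covered M p.x then s(p.y, p.z) else s(p.x, p.y)
noncomputable def X7 (P : Finset (P3 V)) (M : Finset (Sym2 V)) : Finset (Sym2 V) :=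
  (psel P (cls7 M)).image fun p => if s(p.x, p.y) ∈ M then s(p.y, p.z) else s(p.x, p.y)
noncomputable def X8 (w : Sym2 V → ℝ) (P : Finset (P3 V)) (M : Finset (Sym2 V)) :
    Finset (Sym2 V) := (psel P (cls8 M)).image (heavy w)

noncomputable def Y1 (w : Sym2 V → ℝ) (P : Finset (P3 V)) (M : Finset (Sym2 V)) :
    Finset (Sym2 V) := Esub (psel P (cls1 M)) \ X1 w P M
noncomputable def Y2 (P : Finset (P3 V)) (M : Finset (Sym2 V)) : Finset (Sym2 V) :=
  Esub (psel P (cls2 M)) \ X2 P M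
noncomputable def Y3 (w : Sym2 V → ℝ) (P : Finset (P3 V)) (M : Finset (Sym2 V)) :
    Finset (Sym2 V) := Esub (psel P (cls3 M)) \ X3 w P M
noncomputable def Y4 (w : Sym2 V → ℝ) (P : Finset (P3 V)) (M : Finset (Sym2 V)) :
    Finset (Sym2 V) := Esub (psel P (cls4 M)) \ X4 w P M
noncomputable def Y5 (P : Finset (P3 V)) (M : Finset (Sym2 V)) : Finset (Sym2 V) :=
  Esub (psel P (cls5 M)) \ X5 P M
noncomputable def Y6 (P : Finset (P3 V)) (M : Finset (Sym2 V)) : Finset (Sym2 V) :=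
  Esub (psel P (cls6 M)) \ X6 P M
noncomputable def Y7 (P : Finset (P3 V)) (M : Finset (Sym2 V)) : Finset (Sym2 V) :=
  Esub (psel P (cls7 M)) \ X7 P M
noncomputable def Y8 (w : Sym2 V → ℝ) (P : Finset (P3 V)) (M : Finset (Sym2 V)) :
    Finset (Sym2 V) := Esub (psel P (cls8 M)) \ X8 w P M

/-- An edge is a middle edge (w.r.t. `M`) if exactly one of its endpoints lies in `V(M)`. -/
def isMiddle (M : Finset (Sym2 V)) (e : Sym2 V) : Prop :=
  ∃ u v : V, e = s(u, v) ∧ covered M u ∧ ¬ covered M v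

/-- Two edges share a vertex. -/
def shares (e f : Sym2 V) : Prop := ∃ v, v ∈ e ∧ v ∈ f

/-- `g` is a middle edge of some 3-path in `S`. -/
def middleIn (M : Finset (Sym2 V)) (S : Finset (P3 V)) (g : Sym2 V) : Prop :=
  (∃ p ∈ S, g ∈ p.edges) ∧ isMiddle M g

/-- The 3-paths of `P` lying in classes 2, 3 or 4. -/
noncomputable def P234 (P : Finset (P3 V)) (M : Finset (Sym2 V)) : Finset (P3 V) :=
  psel P fun p => cls2 M p ∨ cls3 M p ∨ cls4 M p

/-- `M_1`: edges of `M` sharing a vertex with at least one middle edge of a 3-path of `P*_6`. -/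
noncomputable def Mset1 (P : Finset (P3 V)) (M : Finset (Sym2 V)) : Finset (Sym2 V) :=
  M.filter fun f => ∃ g, middleIn M (psel P (cls6 M)) g ∧ shares f g

/-- `M_2`: edges of `M` sharing a vertex with at least one middle edge, all middle edges met
belonging to 3-paths of `P*_2 ∪ P*_3 ∪ P*_4`. -/
noncomputable def Mset2 (P : Finset (P3 V)) (M : Finset (Sym2 V)) : Finset (Sym2 V) :=
  M.filter fun f =>
    (∃ g, middleIn M P g ∧ shares f g) ∧
    ∀ g, middleIn M P g → shares f g → middleIn M (P234 P M) g

/-- `M_3 = M ∩ E(P*_7)`. -/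
noncomputable def Mset3 (P : Finset (P3 V)) (M : Finset (Sym2 V)) : Finset (Sym2 V) :=
  M ∩ Esub (psel P (cls7 M))

/-- `M_4 = M ∩ E(P*_5)`. -/
noncomputable def Mset4 (P : Finset (P3 V)) (M : Finset (Sym2 V)) : Finset (Sym2 V) :=
  M ∩ Esub (psel P (cls5 M))

/-- The middle edges of 3-paths of `P*_6`. -/
noncomputable def mid6 (P : Finset (P3 V)) (M : Finset (Sym2 V)) : Finset (Sym2 V) :=
  (Esub (psel P (cls6 M))).filter (isMiddle M)

/-- `M'_1`: edges of `M_1` meeting exactly one middle edge of a 3-path of `P*_6` and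
no middle edge of a 3-path of `P*_2 ∪ P*_3 ∪ P*_4`. -/
noncomputable def Mset1' (P : Finset (P3 V)) (M : Finset (Sym2 V)) : Finset (Sym2 V) :=
  (Mset1 P M).filter fun f =>
    ((mid6 P M).filter fun g => shares f g).card = 1 ∧
    ∀ g, middleIn M (P234 P M) g → ¬ shares f g

/-- `M''_1`: edges of `M_1` meeting two middle edges of 3-paths of `P*_6`. -/
noncomputable def Mset1'' (P : Finset (P3 V)) (M : Finset (Sym2 V)) : Finset (Sym2 V) :=
  (Mset1 P M).filter fun f => ((mid6 P M).filter fun g => shares f g).card = 2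

/-- `M'''_1`: edges of `M_1` meeting exactly one middle edge of a 3-path of `P*_6` and
at least one middle edge of a 3-path of `P*_2 ∪ P*_3 ∪ P*_4`. -/
noncomputable def Mset1''' (P : Finset (P3 V)) (M : Finset (Sym2 V)) : Finset (Sym2 V) :=
  (Mset1 P M).filter fun f =>
    ((mid6 P M).filter fun g => shares f g).card = 1 ∧
    ∃ g, middleIn M (P234 P M) g ∧ shares f g

/-- Assumption on `P*`: for every 3-path `xyz ∈ P*` with `y ∉ V(M)` and `x, z ∈ V(M)`,
the vertices `x` and `z` lie in two distinct edges of `M`. -/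
def Ass (P : Finset (P3 V)) (M : Finset (Sym2 V)) : Prop :=
  ∀ p ∈ P, ¬ covered M p.y → covered M p.x → covered M p.z →
    ∃ e ∈ M, ∃ f ∈ M, p.x ∈ e ∧ p.z ∈ f ∧ e ≠ f

/-- An admissible edge w.r.t. `M`: either both endpoints are in `V(M)` and lie in two distinct
edges of `M`, or exactly one endpoint is in `V(M)`. -/
def goodEdge (M : Finset (Sym2 V)) (e : Sym2 V) : Prop :=
  (∃ u v : V, e = s(u, v) ∧ covered M u ∧ covered M v ∧ ∀ f ∈ M, ¬(u ∈ f ∧ v ∈ f)) ∨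
  (∃ u v : V, e = s(u, v) ∧ covered M u ∧ ¬ covered M v)


set_option linter.unusedSectionVars false

-- Auxiliary lemmas

lemma aux_y_mem_edge {p : P3 V} {e : Sym2 V} (he : e ∈ p.edges) : p.y ∈ e := by
  simp only [P3.edges, mem_insert, mem_singleton] at he
  rcases he with rfl | rfl <;> simp

lemma aux_mem_verts_of_mem_edge {p : P3 V} {e : Sym2 V} (he : e ∈ p.edges) {v : V}
    (hv : v ∈ e) : v ∈ p.verts := by
  simp only [P3.edges, mem_insert, mem_singleton] at he
  rcases he with rfl | rfl <;> simp only [Sym2.mem_iff] at hv <;>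
    rcases hv with rfl | rfl <;> simp [P3.verts]

lemma aux_edges_ne {p q : P3 V} (h : Disjoint p.verts q.verts) {e f : Sym2 V}
    (he : e ∈ p.edges) (hf : f ∈ q.edges) : e ≠ f := by
  intro hef
  subst hef
  exact Finset.disjoint_left.1 h (aux_mem_verts_of_mem_edge he (aux_y_mem_edge he))
    (aux_mem_verts_of_mem_edge hf (aux_y_mem_edge he))

lemma aux_edge_ne (p : P3 V) : s(p.x, p.y) ≠ s(p.y, p.z) := by
  intro h
  rcases Sym2.eq_iff.1 h with ⟨h1, _⟩ | ⟨h1, _⟩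
  · exact p.hxy h1
  · exact p.hxz h1

lemma aux_cost_mk (w : Sym2 V → ℝ) (M : Finset (Sym2 V)) (a b : V) :
    cost w M s(a, b) = if covered M a ∧ covered M b then
      w s(a, b) - min (w (eMatch M a)) (w (eMatch M b)) else w s(a, b) := by
  simp only [cost, Sym2.lift_mk]

lemma aux_cost_of_not {M : Finset (Sym2 V)} {a b : V} (w : Sym2 V → ℝ)
    (h : ¬ (covered M a ∧ covered M b)) : cost w M s(a, b) = w s(a, b) := by
  rw [aux_cost_mk, if_neg h]

lemma aux_eMatch_eq {M : Finset (Sym2 V)} (hM : IsMatching M) {e : Sym2 V} (he : e ∈ M)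
    {u : V} (hu : u ∈ e) : eMatch M u = e := by
  have h : ∃ f ∈ M, u ∈ f := ⟨e, he, hu⟩
  rw [eMatch, dif_pos h]
  obtain ⟨hf, huf⟩ := h.choose_spec
  by_contra hne
  exact hM.2 _ hf _ he hne u huf hu

lemma aux_verts_card (p : P3 V) : p.verts.card = 3 := by
  rw [P3.verts, card_insert_of_notMem (by simp [p.hxy, p.hxz]),
    card_insert_of_notMem (by simp [p.hyz]), card_singleton]

lemma aux_covered_of_kcnt_three {M : Finset (Sym2 V)} {p : P3 V} (h : kcnt M p = 3) :
    ∀ v ∈ p.verts, covered M v := by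
  have hsub : p.verts.filter (fun v => covered M v) ⊆ p.verts := filter_subset _ _
  have heq := Finset.eq_of_subset_of_card_le hsub (by rw [aux_verts_card]; rw [kcnt] at h; omega)
  intro v hv
  rw [← heq] at hv
  exact (mem_filter.1 hv).2

lemma aux_kcnt_three_of_all {M : Finset (Sym2 V)} {p : P3 V} (hx : covered M p.x)
    (hy : covered M p.y) (hz : covered M p.z) : kcnt M p = 3 := by
  have hsub : p.verts ⊆ p.verts.filter (fun v => covered M v) := by
    intro v hv
    refine mem_filter.2 ⟨hv, ?_⟩
    simp only [P3.verts, mem_insert, mem_singleton] at hv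
    rcases hv with rfl | rfl | rfl <;> assumption
  have heq := Finset.eq_of_subset_of_card_le hsub (card_le_card (filter_subset _ _))
  rw [kcnt, ← heq, aux_verts_card]

lemma aux_two_le_kcnt {M : Finset (Sym2 V)} {p : P3 V} {a b : V} (hab : a ≠ b)
    (ha : a ∈ p.verts) (hb : b ∈ p.verts) (hca : covered M a) (hcb : covered M b) :
    2 ≤ kcnt M p := by
  have hsub : ({a, b} : Finset V) ⊆ p.verts.filter (fun v => covered M v) := by
    intro v hv
    simp only [mem_insert, mem_singleton] at hv
    rcases hv with rfl | rfl <;> exact mem_filter.2 ⟨by assumption, by assumption⟩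
  calc 2 = ({a, b} : Finset V).card := by rw [card_insert_of_notMem (by simpa using hab),
        card_singleton]
    _ ≤ _ := card_le_card hsub

lemma aux_if_mem_edges (p : P3 V) (c : Prop) [Decidable c] :
    (if c then s(p.x, p.y) else s(p.y, p.z)) ∈ p.edges := by
  split_ifs <;> simp [P3.edges]

lemma aux_if_mem_edges' (p : P3 V) (c : Prop) [Decidable c] :
    (if c then s(p.y, p.z) else s(p.x, p.y)) ∈ p.edges := by
  split_ifs <;> simp [P3.edges]

lemma aux_heavy_mem (w : Sym2 V → ℝ) (p : P3 V) : heavy w p ∈ p.edges := by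
  rw [heavy]; exact aux_if_mem_edges p _

lemma aux_inj {P : Finset (P3 V)} (hPdisj : ∀ p ∈ P, ∀ q ∈ P, p ≠ q → Disjoint p.verts q.verts)
    {f : P3 V → Sym2 V} (hf : ∀ p, f p ∈ p.edges) {S : Finset (P3 V)} (hS : S ⊆ P) :
    ∀ p ∈ S, ∀ q ∈ S, f p = f q → p = q := by
  intro p hp q hq hfe
  by_contra hne
  exact aux_edges_ne (hPdisj p (hS hp) q (hS hq) hne) (hf p) (hf q) hfe

lemma aux_image_disjoint {P S T : Finset (P3 V)} {f g : P3 V → Sym2 V}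
    (hPdisj : ∀ p ∈ P, ∀ q ∈ P, p ≠ q → Disjoint p.verts q.verts)
    (hf : ∀ p, f p ∈ p.edges) (hg : ∀ p, g p ∈ p.edges)
    (hS : S ⊆ P) (hT : T ⊆ P) (hST : ∀ p ∈ S, p ∉ T) :
    Disjoint (S.image f) (T.image g) := by
  rw [Finset.disjoint_left]
  rintro e he he'
  obtain ⟨p, hp, rfl⟩ := Finset.mem_image.1 he
  obtain ⟨q, hq, hqe⟩ := Finset.mem_image.1 he'
  by_cases hpq : p = q
  · exact hST p hp (hpq ▸ hq)
  · exact aux_edges_ne (hPdisj q (hT hq) p (hS hp) (Ne.symm hpq)) (hg q) (hf p) hqe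

lemma aux_Y7 {Pstar : Finset (P3 V)} {M : Finset (Sym2 V)}
    (hPdisj : ∀ p ∈ Pstar, ∀ q ∈ Pstar, p ≠ q → Disjoint p.verts q.verts) :
    Y7 Pstar M = (psel Pstar (cls7 M)).image
      (fun p => if s(p.x, p.y) ∈ M then s(p.x, p.y) else s(p.y, p.z)) := by
  ext e
  simp only [Y7, mem_sdiff, Esub, mem_biUnion, X7, Finset.mem_image, not_exists]
  constructor
  · rintro ⟨⟨p, hp, he⟩, hnot⟩
    refine ⟨p, hp, ?_⟩
    simp only [P3.edges, mem_insert, mem_singleton] at he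
    by_cases hm : s(p.x, p.y) ∈ M
    · rw [if_pos hm]
      rcases he with rfl | rfl
      · rfl
      · exact absurd (⟨hp, by rw [if_pos hm]⟩ : p ∈ psel Pstar (cls7 M) ∧
          (if s(p.x, p.y) ∈ M then s(p.y, p.z) else s(p.x, p.y)) = s(p.y, p.z)) (hnot p)
    · rw [if_neg hm]
      rcases he with rfl | rfl
      · exact absurd (⟨hp, by rw [if_neg hm]⟩ : p ∈ psel Pstar (cls7 M) ∧
          (if s(p.x, p.y) ∈ M then s(p.y, p.z) else s(p.x, p.y)) = s(p.x, p.y)) (hnot p)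
      · rfl
  · rintro ⟨p, hp, rfl⟩
    constructor
    · exact ⟨p, hp, aux_if_mem_edges p _⟩
    · rintro q ⟨hq, hqe⟩
      by_cases hpq : q = p
      · subst hpq
        by_cases hm : s(q.x, q.y) ∈ M
        · rw [if_pos hm, if_pos hm] at hqe
          exact aux_edge_ne q hqe.symm
        · rw [if_neg hm, if_neg hm] at hqe
          exact aux_edge_ne q hqe
      · exact aux_edges_ne (hPdisj q (mem_of_mem_filter q hq) p (mem_of_mem_filter p hp) hpq)
          (aux_if_mem_edges' q _) (aux_if_mem_edges p _) hqe

theorem statement_11 (n : ℕ) (hn : Fintype.card V = n) (h3 : 3 ∣ n)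
    (w : Sym2 V → ℝ) (hw : ∀ e : Sym2 V, 0 ≤ w e)
    (M : Finset (Sym2 V)) (hM : IsMaxMatchingOfSize w (n / 3) M)
    (Pstar : Finset (P3 V)) (hP : IsMaxPacking w Pstar) (hAss : Ass Pstar M) :
    (ew w (X2 Pstar M) + ew w (X3 w Pstar M) + ew w (X4 w Pstar M) + ew w (X7 Pstar M) -
      ew w (Y7 Pstar M) ≤
      cw w M (X2 Pstar M ∪ X3 w Pstar M ∪ X4 w Pstar M ∪ X7 Pstar M)) ∧
    cw w M (X5 Pstar M) = ew w (X5 Pstar M) := by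
  classical
  obtain ⟨hMmatch, -, -⟩ := hM
  obtain ⟨⟨-, hPdisj, -⟩, -⟩ := hP
  have hS2 : psel Pstar (cls2 M) ⊆ Pstar := filter_subset _ _
  have hS3 : psel Pstar (cls3 M) ⊆ Pstar := filter_subset _ _
  have hS4 : psel Pstar (cls4 M) ⊆ Pstar := filter_subset _ _
  have hS5 : psel Pstar (cls5 M) ⊆ Pstar := filter_subset _ _
  have hS7 : psel Pstar (cls7 M) ⊆ Pstar := filter_subset _ _
  constructor
  · -- Part 1
    have h2 : ∀ e ∈ X2 Pstar M, cost w M e = w e := by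
      intro e he
      obtain ⟨p, hp, rfl⟩ := Finset.mem_image.1 he
      have hcls := (mem_filter.1 hp).2
      by_cases hx : covered M p.x
      · rw [if_pos hx]; exact aux_cost_of_not w (fun h => hcls.2 h.2)
      · rw [if_neg hx]; exact aux_cost_of_not w (fun h => hcls.2 h.1)
    have h3' : ∀ e ∈ X3 w Pstar M, cost w M e = w e := by
      intro e he
      obtain ⟨p, hp, rfl⟩ := Finset.mem_image.1 he
      have hcls := (mem_filter.1 hp).2
      have hx : ¬ covered M p.x := fun hx => absurd
        (aux_two_le_kcnt (M := M) (p := p) p.hxy (by simp [P3.verts]) (by simp [P3.verts]) hx hcls.2)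
        (by rw [hcls.1]; omega)
      have hz : ¬ covered M p.z := fun hz => absurd
        (aux_two_le_kcnt (M := M) (p := p) p.hyz (by simp [P3.verts]) (by simp [P3.verts]) hcls.2 hz)
        (by rw [hcls.1]; omega)
      rw [heavy]
      split_ifs
      · exact aux_cost_of_not w (fun h => hx h.1)
      · exact aux_cost_of_not w (fun h => hz h.2)
    have h4 : ∀ e ∈ X4 w Pstar M, cost w M e = w e := by
      intro e he
      obtain ⟨p, hp, rfl⟩ := Finset.mem_image.1 he
      have hcls := (mem_filter.1 hp).2
      rw [heavy]
      split_ifs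
      · exact aux_cost_of_not w (fun h => hcls.2 h.2)
      · exact aux_cost_of_not w (fun h => hcls.2 h.1)
    have e2 : cw w M (X2 Pstar M) = ew w (X2 Pstar M) := Finset.sum_congr rfl h2
    have e3 : cw w M (X3 w Pstar M) = ew w (X3 w Pstar M) := Finset.sum_congr rfl h3'
    have e4 : cw w M (X4 w Pstar M) = ew w (X4 w Pstar M) := Finset.sum_congr rfl h4
    -- the X7 bound
    have hinjf := aux_inj hPdisj (fun p => aux_if_mem_edges' p (s(p.x, p.y) ∈ M)) hS7
    have hinjg := aux_inj hPdisj (fun p => aux_if_mem_edges p (s(p.x, p.y) ∈ M)) hS7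
    have hb : ∀ p ∈ psel Pstar (cls7 M),
        w ((fun p => if s(p.x, p.y) ∈ M then s(p.y, p.z) else s(p.x, p.y)) p) -
        w ((fun p => if s(p.x, p.y) ∈ M then s(p.x, p.y) else s(p.y, p.z)) p) ≤
        cost w M ((fun p => if s(p.x, p.y) ∈ M then s(p.y, p.z) else s(p.x, p.y)) p) := by
      intro p hp
      obtain ⟨hk, hone⟩ := (mem_filter.1 hp).2
      have hall := aux_covered_of_kcnt_three hk
      have hy := hall p.y (by simp [P3.verts])
      by_cases hm : s(p.x, p.y) ∈ M
      · simp only [if_pos hm]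
        rw [aux_cost_mk, if_pos ⟨hy, hall p.z (by simp [P3.verts])⟩]
        have he := aux_eMatch_eq hMmatch hm (show p.y ∈ s(p.x, p.y) by simp)
        have hmin : min (w (eMatch M p.y)) (w (eMatch M p.z)) ≤ w s(p.x, p.y) := by
          rw [← he]; exact min_le_left _ _
        linarith
      · have hm2 : s(p.y, p.z) ∈ M := by
          rcases hone with ⟨h1, -⟩ | ⟨-, hh⟩
          · exact absurd h1 hm
          · exact hh
        simp only [if_neg hm]
        rw [aux_cost_mk, if_pos ⟨hall p.x (by simp [P3.verts]), hy⟩]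
        have he := aux_eMatch_eq hMmatch hm2 (show p.y ∈ s(p.y, p.z) by simp)
        have hmin : min (w (eMatch M p.x)) (w (eMatch M p.y)) ≤ w s(p.y, p.z) := by
          rw [← he]; exact min_le_right _ _
        linarith
    have e7 : ew w (X7 Pstar M) - ew w (Y7 Pstar M) ≤ cw w M (X7 Pstar M) := by
      have ha : cw w M (X7 Pstar M) = ∑ p ∈ psel Pstar (cls7 M),
          cost w M (if s(p.x, p.y) ∈ M then s(p.y, p.z) else s(p.x, p.y)) := by
        rw [cw, X7]; exact Finset.sum_image hinjf
      have hb' : ew w (X7 Pstar M) = ∑ p ∈ psel Pstar (cls7 M),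
          w (if s(p.x, p.y) ∈ M then s(p.y, p.z) else s(p.x, p.y)) := by
        rw [ew, X7]; exact Finset.sum_image hinjf
      have hc : ew w (Y7 Pstar M) = ∑ p ∈ psel Pstar (cls7 M),
          w (if s(p.x, p.y) ∈ M then s(p.x, p.y) else s(p.y, p.z)) := by
        rw [ew, aux_Y7 hPdisj]; exact Finset.sum_image hinjg
      rw [ha, hb', hc, ← Finset.sum_sub_distrib]
      exact Finset.sum_le_sum hb
    -- disjointness
    have hm2 : ∀ p, (fun p : P3 V => if covered M p.x then s(p.x, p.y) else s(p.y, p.z)) p ∈ p.edges :=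
      fun p => aux_if_mem_edges p _
    have hm7 : ∀ p, (fun p : P3 V => if s(p.x, p.y) ∈ M then s(p.y, p.z) else s(p.x, p.y)) p ∈ p.edges :=
      fun p => aux_if_mem_edges' p _
    have hmh : ∀ p, heavy w p ∈ p.edges := fun p => aux_heavy_mem w p
    have d23 : Disjoint (X2 Pstar M) (X3 w Pstar M) :=
      aux_image_disjoint hPdisj hm2 hmh hS2 hS3
        (fun p hp hq => (mem_filter.1 hp).2.2 (mem_filter.1 hq).2.2)
    have d24 : Disjoint (X2 Pstar M) (X4 w Pstar M) :=
      aux_image_disjoint hPdisj hm2 hmh hS2 hS4 (fun p hp hq => by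
        have a := (mem_filter.1 hp).2.1; have b := (mem_filter.1 hq).2.1; omega)
    have d27 : Disjoint (X2 Pstar M) (X7 Pstar M) :=
      aux_image_disjoint hPdisj hm2 hm7 hS2 hS7 (fun p hp hq => by
        have a := (mem_filter.1 hp).2.1; have b := (mem_filter.1 hq).2.1; omega)
    have d34 : Disjoint (X3 w Pstar M) (X4 w Pstar M) :=
      aux_image_disjoint hPdisj hmh hmh hS3 hS4 (fun p hp hq => by
        have a := (mem_filter.1 hp).2.1; have b := (mem_filter.1 hq).2.1; omega)
    have d37 : Disjoint (X3 w Pstar M) (X7 Pstar M) :=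
      aux_image_disjoint hPdisj hmh hm7 hS3 hS7 (fun p hp hq => by
        have a := (mem_filter.1 hp).2.1; have b := (mem_filter.1 hq).2.1; omega)
    have d47 : Disjoint (X4 w Pstar M) (X7 Pstar M) :=
      aux_image_disjoint hPdisj hmh hm7 hS4 hS7 (fun p hp hq => by
        have a := (mem_filter.1 hp).2.1; have b := (mem_filter.1 hq).2.1; omega)
    have hsplit : cw w M (X2 Pstar M ∪ X3 w Pstar M ∪ X4 w Pstar M ∪ X7 Pstar M) =
        cw w M (X2 Pstar M) + cw w M (X3 w Pstar M) + cw w M (X4 w Pstar M) +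
        cw w M (X7 Pstar M) := by
      rw [cw, Finset.sum_union (by
          rw [Finset.disjoint_union_left, Finset.disjoint_union_left]
          exact ⟨⟨d27, d37⟩, d47⟩),
        Finset.sum_union (by rw [Finset.disjoint_union_left]; exact ⟨d24, d34⟩),
        Finset.sum_union d23]
      rfl
    rw [hsplit, e2, e3, e4]
    linarith
  · -- Part 2
    have h5 : ∀ e ∈ X5 Pstar M, cost w M e = w e := by
      intro e he
      obtain ⟨p, hp, rfl⟩ := Finset.mem_image.1 he
      obtain ⟨hk, hy, hone⟩ := (mem_filter.1 hp).2
      by_cases hm : s(p.x, p.y) ∈ M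
      · rw [if_pos hm]
        have hx : covered M p.x := ⟨_, hm, by simp⟩
        have hz : ¬ covered M p.z := by
          intro hz
          rw [aux_kcnt_three_of_all hx hy hz] at hk
          omega
        exact aux_cost_of_not w (fun h => hz h.2)
      · rw [if_neg hm]
        have hm2 : s(p.y, p.z) ∈ M := by
          rcases hone with ⟨h1, -⟩ | ⟨-, hh⟩
          · exact absurd h1 hm
          · exact hh
        have hz : covered M p.z := ⟨_, hm2, by simp⟩
        have hx : ¬ covered M p.x := by
          intro hx
          rw [aux_kcnt_three_of_all hx hy hz] at hk
          omega
        exact aux_cost_of_not w (fun h => hx h.1)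
    exact Finset.sum_congr rfl h5

end MW3PP
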